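/- Identification with Bachmann's ordered-Young-tableaux Schur functions (equation (40)): let m = n and let R′ be the marked alphabet on {1,…,2n} with N = {1,3,5,…,2n−1} primed and M = {2,4,…,2n} unprimed (so the k-th unprimed letter is 2k and the k-th primed letter is 2k−1). Given a family F = (f_{k,c})_{1≤k≤n, c∈ℤ} and an element t in a commutative ring, set x_{k,c} = (1−t) f_{k,c} and y_{k,c} = t f_{k,c}. Then for all partitions μ ⊆ λ, s^{R′}_{λ/μ}(X,Y) = s^{Bac}_{λ/μ}(F;t). -/

import Mathlib

namespace SuperSchur

variable {A : Type*} [CommRing A]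

/-- The content of a box `(i, j)` (rows and columns indexed from 0;
row `i` occupies columns `μ_i ≤ j < λ_i`, so the content is `j - i`). -/
def content (p : ℕ × ℕ) : ℤ := (p.2 : ℤ) - (p.1 : ℤ)

/-- The cells of the skew Young diagram `F^{λ/μ}` (0-indexed rows and columns). -/
def cells (lam mu : List ℕ) : Finset (ℕ × ℕ) :=
  (Finset.range lam.length).biUnion fun i =>
    (Finset.Ico (mu.getD i 0) (lam.getD i 0)).image fun j => (i, j)

/-- `l` is a partition: a weakly decreasing list of positive integers. -/
def IsPartition (l : List ℕ) : Prop := l.Pairwise (· ≥ ·) ∧ ∀ x ∈ l, 0 < x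

/-- `μ ⊆ λ`. -/
def Contained (mu lam : List ℕ) : Prop := ∀ i, mu.getD i 0 ≤ lam.getD i 0

/-- `T` is a skew supertableau on the cell set `C` over the marked alphabet `Fin NA`
(letters in their natural order), where `prm r = true` means the letter `r` is primed:
entries weakly increase along rows and down columns, no two equal unprimed entries lie
in the same column, and no two equal primed entries lie in the same row. -/
def IsSuperTab {NA : ℕ} (C : Finset (ℕ × ℕ)) (prm : Fin NA → Bool)
    (T : {p // p ∈ C} → Fin NA) : Prop :=
  (∀ u v : {p // p ∈ C}, u.1.1 = v.1.1 → u.1.2 ≤ v.1.2 → T u ≤ T v) ∧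
  (∀ u v : {p // p ∈ C}, u.1.2 = v.1.2 → u.1.1 ≤ v.1.1 → T u ≤ T v) ∧
  (∀ u v : {p // p ∈ C}, u.1.2 = v.1.2 → u.1.1 ≠ v.1.1 → prm (T u) = false → T u ≠ T v) ∧
  (∀ u v : {p // p ∈ C}, u.1.1 = v.1.1 → u.1.2 ≠ v.1.2 → prm (T u) = true → T u ≠ T v)

open Classical in
/-- Generic weighted sum over all skew supertableaux on `C`: the weight of the letter `r`
placed in a box of content `c` is `w r c`. -/
noncomputable def tabSum {NA : ℕ} (C : Finset (ℕ × ℕ)) (prm : Fin NA → Bool)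
    (w : Fin NA → ℤ → A) : A :=
  ∑ T ∈ Finset.univ.filter (fun T : {p // p ∈ C} → Fin NA => IsSuperTab C prm T),
    ∏ u : {p // p ∈ C}, w (T u) (content u.1)

/-- The (1-based) index of the letter `r` among the letters with the same marking:
if `r` is the k-th smallest unprimed letter then `idx prm r = k`, and similarly
for primed letters. -/
def idx {NA : ℕ} (prm : Fin NA → Bool) (r : Fin NA) : ℕ :=
  (Finset.univ.filter fun r' => prm r' = prm r ∧ r' ≤ r).card

/-- `σ(r) = #{i ∈ M : i ≤ r} - #{j ∈ N : j ≤ r}`, plus `1` if `r` is primed. -/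
def sigma {NA : ℕ} (prm : Fin NA → Bool) (r : Fin NA) : ℤ :=
  ((Finset.univ.filter fun r' : Fin NA => prm r' = false ∧ r' ≤ r).card : ℤ)
    - ((Finset.univ.filter fun r' : Fin NA => prm r' = true ∧ r' ≤ r).card : ℤ)
    + (if prm r then 1 else 0)

/-- Ninth-variation weights: the k-th unprimed letter in a box of content `c`
carries weight `X k c`, and the ℓ-th primed letter carries `Y ℓ c`. -/
def wNinth {m n NA : ℕ} (prm : Fin NA → Bool) (X : Fin m → ℤ → A) (Y : Fin n → ℤ → A) :
    Fin NA → ℤ → A := fun r c =>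
  if prm r then (if h : idx prm r - 1 < n then Y ⟨idx prm r - 1, h⟩ c else 0)
  else (if h : idx prm r - 1 < m then X ⟨idx prm r - 1, h⟩ c else 0)

/-- Factorial supersymmetric weights: the k-th unprimed letter `r` in a box of content `c`
carries weight `x k + a (σ(r) + c)`, and the ℓ-th primed letter `r` carries
`y ℓ - a (σ(r) + c)`. -/
def wFact {m n NA : ℕ} (prm : Fin NA → Bool) (x : Fin m → A) (y : Fin n → A) (a : ℤ → A) :
    Fin NA → ℤ → A := fun r c =>
  if prm r then
    (if h : idx prm r - 1 < n then y ⟨idx prm r - 1, h⟩ else 0) - a (sigma prm r + c)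
  else
    (if h : idx prm r - 1 < m then x ⟨idx prm r - 1, h⟩ else 0) + a (sigma prm r + c)

/-- The marked alphabet `1 < 2 < ⋯ < m < 1′ < 2′ < ⋯ < n′`. -/
def prmFirst (m n : ℕ) : Fin (m + n) → Bool := fun r => decide (m ≤ (r : ℕ))

/-- The classical (first variation) supersymmetric skew Schur function `s_{λ/μ}(x,y)`. -/
noncomputable def superSchur (lam mu : List ℕ) {m n : ℕ} (x : Fin m → A) (y : Fin n → A) : A :=
  tabSum (cells lam mu) (prmFirst m n) (wNinth (prmFirst m n) (fun k _ => x k) (fun l _ => y l))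

/-- The row (counted from the top, 0-based) of the box of content `c` in the canonical
realisation of the segment of the cutting strip ending at content `d`:
the number of vertical steps strictly between `c` and `d`. -/
noncomputable def ribRow (dir : ℤ → Bool) (d c : ℤ) : ℕ :=
  ((Finset.Ioc c d).filter fun c' => dir c' = true).card

/-- The shift `m(p,q)`: the content (within the cutting strip) of the box of the ribbon
`φ_{ad}` that lies on the main diagonal of the skew diagram whose outer rim is `φ_{ad}`. -/
noncomputable def mShift (dir : ℤ → Bool) (a d : ℤ) : ℤ := a + (ribRow dir d a : ℤ)

/-- The ribbon `φ_{ad}` of the cutting strip, realised canonically as a skew diagram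
in its own right (its box of cutting-strip content `c` gets standard content
`c - mShift dir a d`). -/
noncomputable def ribbonCells (dir : ℤ → Bool) (a d : ℤ) : Finset (ℕ × ℕ) :=
  (Finset.Icc a d).image fun c =>
    (ribRow dir d c, (c + (ribRow dir d c : ℤ) - mShift dir a d).toNat)

/-- The cell set `S` coincides in shape and contents with the segment `φ_{ab}` of the
cutting strip described by `dir` (where `dir c = true` iff the box of content `c - 1`
lies below the box of content `c`, and `dir c = false` iff it lies to its left). -/
def StripMatches (dir : ℤ → Bool) (a b : ℤ) (S : Finset (ℕ × ℕ)) : Prop :=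
  (∀ c : ℤ, (a ≤ c ∧ c ≤ b) ↔ ∃ u ∈ S, content u = c) ∧
  (∀ u ∈ S, ∀ v ∈ S, content u = content v → u = v) ∧
  (∀ u ∈ S, ∀ v ∈ S, content v = content u + 1 →
    if dir (content v) then v.1 + 1 = u.1 ∧ v.2 = u.2 else v.1 = u.1 ∧ u.2 + 1 = v.2)

/-- `(dir, ab, θ)` is an outside decomposition of `F^{λ/μ}`: the strips `θ p` are
pairwise disjoint with union the whole diagram, each `θ p` coincides in shape
and contents with the segment `φ_{(ab p).1, (ab p).2}` of the common cutting strip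
described by `dir`, the starting box of each strip lies on the left or bottom boundary,
the ending box of each strip lies on the right or top boundary, and the cutting strip
contains a box of every relevant content occurring in the diagram. -/
def OutsideDecomp (lam mu : List ℕ) {s : ℕ} (dir : ℤ → Bool)
    (ab : Fin s → ℤ × ℤ) (θ : Fin s → Finset (ℕ × ℕ)) : Prop :=
  (∀ p q : Fin s, p ≠ q → Disjoint (θ p) (θ q)) ∧
  (Finset.univ.biUnion θ = cells lam mu) ∧
  (∀ p : Fin s, StripMatches dir (ab p).1 (ab p).2 (θ p)) ∧
  (∀ p : Fin s, ∀ u ∈ θ p, content u = (ab p).1 →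
    u.2 = 0 ∨ (u.1, u.2 - 1) ∉ cells lam mu ∨ (u.1 + 1, u.2) ∉ cells lam mu) ∧
  (∀ p : Fin s, ∀ u ∈ θ p, content u = (ab p).2 →
    (u.1, u.2 + 1) ∉ cells lam mu ∨ u.1 = 0 ∨ (u.1 - 1, u.2) ∉ cells lam mu) ∧
  (∀ p q : Fin s, ∀ c : ℤ, (ab p).1 ≤ c → c ≤ (ab q).2 → ∃ u ∈ cells lam mu, content u = c)

/-- Two boxes are edgewise adjacent. -/
def CellAdj (u v : ℕ × ℕ) : Prop :=
  (u.1 = v.1 ∧ (u.2 + 1 = v.2 ∨ v.2 + 1 = u.2)) ∨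
  (u.2 = v.2 ∧ (u.1 + 1 = v.1 ∨ v.1 + 1 = u.1))

/-- `C` is edgewise connected. -/
def ConnectedCells (C : Finset (ℕ × ℕ)) : Prop :=
  ∀ u ∈ C, ∀ v ∈ C,
    Relation.ReflTransGen (fun p q => p ∈ C ∧ q ∈ C ∧ CellAdj p q) u v

/-- `C` contains no 2×2 block of boxes. -/
def NoTwoByTwo (C : Finset (ℕ × ℕ)) : Prop :=
  ∀ i j : ℕ, ¬((i, j) ∈ C ∧ (i + 1, j) ∈ C ∧ (i, j + 1) ∈ C ∧ (i + 1, j + 1) ∈ C)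

/-- `C` is a ribbon: nonempty, edgewise connected, with no 2×2 block of boxes. -/
def IsRibbon (C : Finset (ℕ × ℕ)) : Prop :=
  C.Nonempty ∧ ConnectedCells C ∧ NoTwoByTwo C

/-- `T` is an ordered Young tableau on `C`: entries weakly increase along rows and
down columns, and strictly increase down diagonals. -/
def IsOYT {nL : ℕ} (C : Finset (ℕ × ℕ)) (T : {p // p ∈ C} → Fin nL) : Prop :=
  (∀ u v : {p // p ∈ C}, u.1.1 = v.1.1 → u.1.2 ≤ v.1.2 → T u ≤ T v) ∧
  (∀ u v : {p // p ∈ C}, u.1.2 = v.1.2 → u.1.1 ≤ v.1.1 → T u ≤ T v) ∧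
  (∀ u v : {p // p ∈ C}, u.1.1 + 1 = v.1.1 → u.1.2 + 1 = v.1.2 → T u < T v)

/-- The number `h(T)` of horizontally adjacent pairs of equal entries. -/
def horizPairs {nL : ℕ} (C : Finset (ℕ × ℕ)) (T : {p // p ∈ C} → Fin nL) : ℕ :=
  (Finset.univ.filter fun uv : {p // p ∈ C} × {p // p ∈ C} =>
    uv.1.1.1 = uv.2.1.1 ∧ uv.1.1.2 + 1 = uv.2.1.2 ∧ T uv.1 = T uv.2).card

/-- The number `v(T)` of vertically adjacent pairs of equal entries. -/
def vertPairs {nL : ℕ} (C : Finset (ℕ × ℕ)) (T : {p // p ∈ C} → Fin nL) : ℕ :=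
  (Finset.univ.filter fun uv : {p // p ∈ C} × {p // p ∈ C} =>
    uv.1.1.2 = uv.2.1.2 ∧ uv.1.1.1 + 1 = uv.2.1.1 ∧ T uv.1 = T uv.2).card

open Classical in
/-- Bachmann's ordered-Young-tableau Schur function of the cell set `C`. -/
noncomputable def bacSum (C : Finset (ℕ × ℕ)) {nL : ℕ} (F : Fin nL → ℤ → A) (t : A) : A :=
  ∑ T ∈ Finset.univ.filter (fun T : {p // p ∈ C} → Fin nL => IsOYT C T),
    t ^ vertPairs C T * (1 - t) ^ horizPairs C T *
      ∏ u : {p // p ∈ C}, F (T u) (content u.1)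

/-- Molev's factorial supersymmetric weights on the alphabet
`n′ < ⋯ < 2′ < 1′ < 1 < 2 < ⋯ < m` (position `p < n` is the letter `(n-p)′`,
position `n + k - 1` is the letter `k`): the letter `k` in a box of content `c`
carries weight `x k + a (k + c)` and the letter `ℓ′` carries `y ℓ - a (ℓ + c)`. -/
def wMol {m n : ℕ} (x : Fin m → A) (y : Fin n → A) (a : ℤ → A) : Fin (m + n) → ℤ → A :=
  fun r c =>
    if h : (r : ℕ) < n then
      y ⟨n - 1 - (r : ℕ), by omega⟩ - a (((n : ℤ) - ((r : ℕ) : ℤ)) + c)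
    else
      x ⟨(r : ℕ) - n, by have := r.isLt; omega⟩ + a ((((r : ℕ) : ℤ) - (n : ℤ) + 1) + c)

/-!
Group the letters of the alternating alphabet in pairs `(2k−1)′ < 2k`. Replacing every entry of a
supertableau by the index `k` of its pair gives an ordered Young tableau `S`, and the supertableau
is recovered from `S` and a choice of marks: a box whose lower neighbour has the same index must be
primed, a box whose left neighbour has the same index must be unprimed (strictness on diagonals
rules out both at once), and every other mark is free. Summing the weights `t` (primed) and
`1 − t` (unprimed) over the free marks gives `1`, so the fibre over `S` contributes
`t^{v(S)} (1−t)^{h(S)}` times the `F`-weight of `S`.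
-/

open Finset

section Letters

variable {n : ℕ}

def altPrm (N : ℕ) : Fin N → Bool := fun r => decide ((r : ℕ) % 2 = 0)

/-- `(k, b)` is the letter at position `2k + 1` if `b` and `2k` otherwise, i.e. (counting `k`
from `0`) the paper's unprimed letter `2k + 2` or primed letter `(2k + 1)′`. -/
def altLetter (n : ℕ) : Fin n × Bool ≃ Fin (n + n) where
  toFun p := ⟨2 * (p.1 : ℕ) + p.2.toNat, by cases p.2 <;> simp <;> omega⟩
  invFun r := (⟨(r : ℕ) / 2, by omega⟩, decide ((r : ℕ) % 2 = 1))
  left_inv := by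
    rintro ⟨k, b⟩
    cases b
    · simp
    · ext <;> simp; omega
  right_inv := by
    intro r
    ext
    by_cases h : (r : ℕ) % 2 = 1 <;> simp [h] <;> omega

lemma altLetter_val (p : Fin n × Bool) :
    (altLetter n p : ℕ) = 2 * (p.1 : ℕ) + p.2.toNat := rfl

@[simp]
lemma altPrm_altLetter (p : Fin n × Bool) : altPrm (n + n) (altLetter n p) = !p.2 := by
  cases h : p.2 <;> simp [altPrm, altLetter_val, h]

lemma altLetter_le_altLetter_iff {p q : Fin n × Bool} :
    altLetter n p ≤ altLetter n q ↔ p.1 < q.1 ∨ p.1 = q.1 ∧ p.2 ≤ q.2 := by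
  rw [Fin.le_def, altLetter_val, altLetter_val, Fin.lt_def, Fin.ext_iff]
  cases p.2 <;> cases q.2 <;> simp <;> omega

lemma le_of_altLetter_le {p q : Fin n × Bool} (h : altLetter n p ≤ altLetter n q) : p.1 ≤ q.1 :=
  (altLetter_le_altLetter_iff.mp h).elim le_of_lt fun h => h.1.le

lemma altPrm_eq_altPrm_iff {N : ℕ} {a b : Fin N} :
    altPrm N a = altPrm N b ↔ (a : ℕ) % 2 = (b : ℕ) % 2 := by
  rcases Nat.mod_two_eq_zero_or_one a with ha | ha <;>
    rcases Nat.mod_two_eq_zero_or_one b with hb | hb <;> simp [altPrm, ha, hb]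

lemma idx_altPrm {N : ℕ} (r : Fin N) : idx (altPrm N) r = (r : ℕ) / 2 + 1 := by
  rw [idx, ← card_range ((r : ℕ) / 2 + 1)]
  refine card_bij (fun a _ => (a : ℕ) / 2) ?_ ?_ ?_
  · intro a ha
    simp only [mem_filter, mem_univ, true_and, altPrm_eq_altPrm_iff, Fin.le_def] at ha
    rw [mem_range]
    omega
  · intro a ha b hb hab
    simp only [mem_filter, mem_univ, true_and, altPrm_eq_altPrm_iff, Fin.le_def] at ha hb
    exact Fin.ext (by omega)
  · intro k hk
    rw [mem_range] at hk
    refine ⟨⟨2 * k + (r : ℕ) % 2, by omega⟩, ?_, by simp only; omega⟩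
    simp only [mem_filter, mem_univ, true_and, altPrm_eq_altPrm_iff, Fin.le_def]
    omega

lemma wNinth_altPrm_altLetter (X Y : Fin n → ℤ → A) (p : Fin n × Bool) (c : ℤ) :
    wNinth (altPrm (n + n)) X Y (altLetter n p) c = if p.2 then X p.1 c else Y p.1 c := by
  have hk : (altLetter n p : ℕ) / 2 = p.1 := by
    have := p.2.toNat_le
    rw [altLetter_val]
    omega
  simp only [wNinth, idx_altPrm, hk, altPrm_altLetter, Nat.add_sub_cancel, Fin.is_lt, dif_pos]
  cases p.2 <;> rfl

end Letters

section Cells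

lemma mem_cells {lam mu : List ℕ} {p : ℕ × ℕ} :
    p ∈ cells lam mu ↔ p.1 < lam.length ∧ mu.getD p.1 0 ≤ p.2 ∧ p.2 < lam.getD p.1 0 := by
  simp only [cells, mem_biUnion, mem_range, mem_image, mem_Ico]
  constructor
  · rintro ⟨i, hi, j, hj, rfl⟩
    exact ⟨hi, hj⟩
  · rintro ⟨hi, hj⟩
    exact ⟨p.1, hi, p.2, hj, rfl⟩

lemma getD_antitone {l : List ℕ} (h : l.Pairwise (· ≥ ·)) : Antitone (l.getD · 0) := by
  intro i k hik
  dsimp only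
  rcases lt_or_ge k l.length with hk | hk
  · rw [List.getD_eq_getElem l 0 hk, List.getD_eq_getElem l 0 (hik.trans_lt hk)]
    rcases hik.eq_or_lt with rfl | hlt
    · rfl
    · exact List.pairwise_iff_getElem.mp h i k _ hk hlt
  · rw [List.getD_eq_default l 0 hk]
    exact Nat.zero_le _

lemma cells_ordConnected {lam mu : List ℕ} (hlam : lam.Pairwise (· ≥ ·))
    (hmu : mu.Pairwise (· ≥ ·)) : (cells lam mu : Set (ℕ × ℕ)).OrdConnected := by
  refine ⟨fun x hx z hz y ⟨hxy, hyz⟩ => ?_⟩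
  rw [mem_coe, mem_cells] at hx hz ⊢
  have hmu' := getD_antitone hmu hxy.1
  have hlam' := getD_antitone hlam hyz.1
  exact ⟨hyz.1.trans_lt hz.1, hmu'.trans (hx.2.1.trans hxy.2),
    hyz.2.trans_lt (hz.2.2.trans_le hlam')⟩

end Cells

section Counting

variable {α β : Type*} [Fintype α] [Fintype β] (P : α × β → Prop) [DecidablePred P]

lemma card_filter_eq_card_filter_exists_fst [DecidablePred fun a => ∃ b, P (a, b)]
    (hP : ∀ p q, P p → P q → p.1 = q.1 → p = q) :
    #{p | P p} = #{a | ∃ b, P (a, b)} := by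
  refine card_bij (fun p _ => p.1) (fun p hp => ?_) (fun p hp q hq h => ?_) (fun a ha => ?_)
  · simp only [mem_filter, mem_univ, true_and] at hp ⊢
    exact ⟨p.2, hp⟩
  · simp only [mem_filter, mem_univ, true_and] at hp hq
    exact hP p q hp hq h
  · simp only [mem_filter, mem_univ, true_and] at ha
    obtain ⟨b, hb⟩ := ha
    exact ⟨(a, b), by simpa using hb, rfl⟩

lemma card_filter_eq_card_filter_exists_snd [DecidablePred fun b => ∃ a, P (a, b)]
    (hP : ∀ p q, P p → P q → p.2 = q.2 → p = q) :
    #{p | P p} = #{b | ∃ a, P (a, b)} := by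
  rw [card_equiv (Equiv.prodComm α β) (t := {q | P q.swap}) (by simp)]
  convert card_filter_eq_card_filter_exists_fst (fun q : β × α => P q.swap) _ using 2
  · ext; simp
  · exact fun p q hp hq h => Prod.swap_injective (hP _ _ hp hq h)

end Counting

section Marks

variable {n : ℕ} {C : Finset (ℕ × ℕ)}

def SameBelow (S : C → Fin n) (u : C) : Prop :=
  ∃ w : C, u.1.2 = w.1.2 ∧ u.1.1 + 1 = w.1.1 ∧ S u = S w

def SameLeft (S : C → Fin n) (v : C) : Prop :=
  ∃ w : C, w.1.1 = v.1.1 ∧ w.1.2 + 1 = v.1.2 ∧ S w = S v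

open Classical in
lemma card_sameBelow (S : C → Fin n) : #{u | SameBelow S u} = vertPairs C S := by
  rw [vertPairs, card_filter_eq_card_filter_exists_fst _ fun p q hp hq h =>
    Prod.ext h (Subtype.ext (Prod.ext (by rw [← hp.2.1, ← hq.2.1, h])
      (by rw [← hp.1, ← hq.1, h])))]
  congr

open Classical in
lemma card_sameLeft (S : C → Fin n) : #{v | SameLeft S v} = horizPairs C S := by
  rw [horizPairs, card_filter_eq_card_filter_exists_snd _ fun p q hp hq h =>
    Prod.ext (Subtype.ext (Prod.ext (by rw [hp.1, hq.1, h])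
      (Nat.add_right_cancel (hp.2.1.trans (h ▸ hq.2.1.symm))))) h]
  congr

lemma IsOYT.not_sameLeft_and_sameBelow {S : C → Fin n} (hS : IsOYT C S) (u : C) :
    ¬(SameLeft S u ∧ SameBelow S u) := by
  rintro ⟨⟨w, hwr, hwc, hws⟩, ⟨w', hw'c, hw'r, hw's⟩⟩
  have := hS.2.2 w w' (by omega) (by omega)
  rw [hws, hw's] at this
  exact this.false

open Classical in
/-- The marks (`true` = unprimed) that a box of the OYT `S` may carry in a supertableau. -/
noncomputable def allowedMarks (S : C → Fin n) (u : C) : Finset Bool :=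
  if SameBelow S u then {false} else if SameLeft S u then {true} else univ

variable {S : C → Fin n}

lemma IsOYT.mem_allowedMarks_iff (hS : IsOYT C S) {u : C} {b : Bool} :
    b ∈ allowedMarks S u ↔ (SameBelow S u → b = false) ∧ (SameLeft S u → b = true) := by
  have := hS.not_sameLeft_and_sameBelow u
  unfold allowedMarks
  split_ifs with hB hL <;> simp_all

open Classical in
lemma IsOYT.sum_allowedMarks (hS : IsOYT C S) (t : A) (u : C) :
    ∑ b ∈ allowedMarks S u, (if b then 1 - t else t) =
      t ^ (if SameBelow S u then 1 else 0) * (1 - t) ^ (if SameLeft S u then 1 else 0) := by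
  have := hS.not_sameLeft_and_sameBelow u
  unfold allowedMarks
  split_ifs with hB hL <;> simp_all

lemma IsOYT.sum_piFinset_allowedMarks (hS : IsOYT C S) (t : A) :
    ∑ ε ∈ Fintype.piFinset (allowedMarks S), ∏ u, (if ε u then 1 - t else t) =
      t ^ vertPairs C S * (1 - t) ^ horizPairs C S := by
  rw [← prod_univ_sum (allowedMarks S) fun _ b => if b then 1 - t else t,
    prod_congr rfl fun u _ => hS.sum_allowedMarks t u, prod_mul_distrib, prod_pow_eq_pow_sum,
    prod_pow_eq_pow_sum, sum_boole, sum_boole, Nat.cast_id, Nat.cast_id,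
    card_sameBelow, card_sameLeft]

end Marks

section Encoding

variable {n : ℕ} {C : Finset (ℕ × ℕ)} {S : C → Fin n} {ε : C → Bool}

lemma IsSuperTab.mark_eq_false_of_sameBelow
    (hT : IsSuperTab C (altPrm (n + n)) fun u => altLetter n (S u, ε u)) {u : C}
    (h : SameBelow S u) : ε u = false := by
  obtain ⟨w, hc, hr, hs⟩ := h
  have hle : ε u ≤ ε w := by
    simpa [hs] using altLetter_le_altLetter_iff.mp (hT.2.1 u w hc (by omega))
  by_contra hε
  rw [Bool.not_eq_false] at hε
  exact hT.2.2.1 u w hc (by omega) (by simp [hε]) (by simp [hs, hε, hle hε])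

lemma IsSuperTab.mark_eq_true_of_sameLeft
    (hT : IsSuperTab C (altPrm (n + n)) fun u => altLetter n (S u, ε u)) {v : C}
    (h : SameLeft S v) : ε v = true := by
  obtain ⟨w, hr, hc, hs⟩ := h
  have hle : ε w ≤ ε v := by
    simpa [hs] using altLetter_le_altLetter_iff.mp (hT.1 w v hr (by omega))
  by_contra hε
  rw [Bool.not_eq_true] at hε
  have hεw : ε w = false := Bool.eq_false_of_le_false (hε ▸ hle)
  exact hT.2.2.2 w v hr (by omega) (by simp [hεw]) (by simp [hs, hε, hεw])

lemma IsSuperTab.isOYT (hC : (C : Set (ℕ × ℕ)).OrdConnected)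
    (hT : IsSuperTab C (altPrm (n + n)) fun u => altLetter n (S u, ε u)) : IsOYT C S := by
  have row : ∀ u v : C, u.1.1 = v.1.1 → u.1.2 ≤ v.1.2 → S u ≤ S v :=
    fun u v hr hc => le_of_altLetter_le (hT.1 u v hr hc)
  have col : ∀ u v : C, u.1.2 = v.1.2 → u.1.1 ≤ v.1.1 → S u ≤ S v :=
    fun u v hc hr => le_of_altLetter_le (hT.2.1 u v hc hr)
  refine ⟨row, col, fun u v hr hc => ?_⟩
  by_contra! hle
  -- the box right of `u` would have equal entries to its left and below it
  let w : C :=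
    ⟨(u.1.1, u.1.2 + 1), hC.out u.2 v.2 ⟨⟨le_rfl, by omega⟩, ⟨by omega, by omega⟩⟩⟩
  have huw : S u = S w := le_antisymm (row u w rfl (by simp [w])) ((col w v (by simp [w]; omega)
    (by simp [w]; omega)).trans hle)
  have hwv : S w = S v := le_antisymm (col w v (by simp [w]; omega) (by simp [w]; omega))
    (hle.trans (row u w rfl (by simp [w])))
  have hw_true := hT.mark_eq_true_of_sameLeft (v := w) ⟨u, rfl, rfl, huw⟩
  have hw_false :=
    hT.mark_eq_false_of_sameBelow (u := w) ⟨v, by simp [w]; omega, by simp [w]; omega, hwv⟩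
  exact Bool.false_ne_true (hw_false.symm.trans hw_true)

lemma IsOYT.sameLeft_of_eq (hC : (C : Set (ℕ × ℕ)).OrdConnected) (hS : IsOYT C S) {u v : C}
    (hr : u.1.1 = v.1.1) (hc : u.1.2 < v.1.2) (hs : S u = S v) : SameLeft S v := by
  let w : C :=
    ⟨(v.1.1, v.1.2 - 1), hC.out u.2 v.2 ⟨⟨hr.le, by omega⟩, ⟨le_rfl, by omega⟩⟩⟩
  refine ⟨w, rfl, by simp [w]; omega, le_antisymm (hS.1 w v rfl (by simp [w])) ?_⟩
  exact hs ▸ hS.1 u w hr (by simp [w]; omega)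

lemma IsOYT.sameBelow_of_eq (hC : (C : Set (ℕ × ℕ)).OrdConnected) (hS : IsOYT C S) {u v : C}
    (hc : u.1.2 = v.1.2) (hr : u.1.1 < v.1.1) (hs : S u = S v) : SameBelow S u := by
  let w : C :=
    ⟨(u.1.1 + 1, u.1.2), hC.out u.2 v.2 ⟨⟨by omega, le_rfl⟩, ⟨by omega, hc.le⟩⟩⟩
  refine ⟨w, rfl, rfl, le_antisymm (hS.2.1 u w rfl (by simp [w])) ?_⟩
  exact hs ▸ hS.2.1 w v hc (by simp [w]; omega)

lemma IsOYT.isSuperTab (hC : (C : Set (ℕ × ℕ)).OrdConnected) (hS : IsOYT C S)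
    (hB : ∀ u, SameBelow S u → ε u = false) (hL : ∀ u, SameLeft S u → ε u = true) :
    IsSuperTab C (altPrm (n + n)) fun u => altLetter n (S u, ε u) := by
  refine ⟨fun u v hr hc => ?_, fun u v hc hr => ?_, fun u v hc hr hu heq => ?_,
    fun u v hr hc hu heq => ?_⟩
  · rw [altLetter_le_altLetter_iff]
    rcases (hS.1 u v hr hc).lt_or_eq with hlt | hs
    · exact Or.inl hlt
    rcases hc.lt_or_eq with hc | hc
    · simp [hs, hL v (hS.sameLeft_of_eq hC hr hc hs)]
    · simp [Subtype.ext (Prod.ext hr hc)]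
  · rw [altLetter_le_altLetter_iff]
    rcases (hS.2.1 u v hc hr).lt_or_eq with hlt | hs
    · exact Or.inl hlt
    rcases hr.lt_or_eq with hr | hr
    · simp [hs, hB u (hS.sameBelow_of_eq hC hc hr hs)]
    · simp [Subtype.ext (Prod.ext hr hc)]
  · simp only [altPrm_altLetter, Bool.not_eq_false'] at hu
    obtain ⟨hs, he⟩ := Prod.ext_iff.mp ((altLetter n).injective heq)
    rcases Nat.lt_or_gt_of_ne hr with h | h
    · simp [hB u (hS.sameBelow_of_eq hC hc h hs)] at hu
    · simp [hB v (hS.sameBelow_of_eq hC hc.symm h hs.symm), hu] at he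
  · simp only [altPrm_altLetter, Bool.not_eq_true'] at hu
    obtain ⟨hs, he⟩ := Prod.ext_iff.mp ((altLetter n).injective heq)
    rcases Nat.lt_or_gt_of_ne hc with h | h
    · simp [hL v (hS.sameLeft_of_eq hC hr h hs), hu] at he
    · simp [hL u (hS.sameLeft_of_eq hC hr.symm h hs.symm)] at hu

lemma isSuperTab_altLetter_iff (hC : (C : Set (ℕ × ℕ)).OrdConnected) :
    IsSuperTab C (altPrm (n + n)) (fun u => altLetter n (S u, ε u)) ↔
      IsOYT C S ∧ ε ∈ Fintype.piFinset (allowedMarks S) := by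
  rw [Fintype.mem_piFinset]
  constructor
  · intro hT
    have hS := hT.isOYT hC
    exact ⟨hS, fun u => hS.mem_allowedMarks_iff.mpr
      ⟨hT.mark_eq_false_of_sameBelow, hT.mark_eq_true_of_sameLeft⟩⟩
  · rintro ⟨hS, hε⟩
    exact hS.isSuperTab hC (fun u => (hS.mem_allowedMarks_iff.mp (hε u)).1)
      fun u => (hS.mem_allowedMarks_iff.mp (hε u)).2

end Encoding

lemma tabSum_altPrm_eq_bacSum {n : ℕ} {C : Finset (ℕ × ℕ)}
    (hC : (C : Set (ℕ × ℕ)).OrdConnected) (F : Fin n → ℤ → A) (t : A) :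
    tabSum C (altPrm (n + n))
        (wNinth (altPrm (n + n)) (fun k c => (1 - t) * F k c) (fun k c => t * F k c)) =
      bacSum C F t := by
  classical
  let e : (C → Fin n) × (C → Bool) ≃ (C → Fin (n + n)) :=
    (Equiv.arrowProdEquivProdArrow _ _ _).symm.trans ((Equiv.refl C).arrowCongr (altLetter n))
  have he (p) : e p = fun u => altLetter n (p.1 u, p.2 u) := rfl
  calc _ = ∑ p ∈ univ.filter fun p : (C → Fin n) × (C → Bool) =>
          IsOYT C p.1 ∧ p.2 ∈ Fintype.piFinset (allowedMarks p.1),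
        ∏ u, (if p.2 u then 1 - t else t) * F (p.1 u) (content u.1) := by
        refine (sum_equiv e (fun p => ?_) fun p _ => ?_).symm
        · rw [he]
          simp only [mem_filter, mem_univ, true_and, isSuperTab_altLetter_iff hC]
        · refine prod_congr rfl fun u _ => ?_
          rw [he, wNinth_altPrm_altLetter]
          split_ifs <;> rfl
    _ = ∑ S ∈ univ.filter (IsOYT C), ∑ ε ∈ Fintype.piFinset (allowedMarks S),
          ∏ u, (if ε u then 1 - t else t) * F (S u) (content u.1) :=
        sum_finset_product _ _ _ (by simp)
    _ = bacSum C F t := by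
        refine sum_congr rfl fun S hS => ?_
        rw [← (mem_filter.mp hS).2.sum_piFinset_allowedMarks t, sum_mul]
        simp only [prod_mul_distrib]

theorem bachmann_identification_general (n : ℕ) (lam mu : List ℕ) (hlam : IsPartition lam)
    (hmu : IsPartition mu)
    (F : Fin n → ℤ → A) (t : A) :
    tabSum (cells lam mu) (fun r : Fin (n + n) => decide ((r : ℕ) % 2 = 0))
        (wNinth (fun r : Fin (n + n) => decide ((r : ℕ) % 2 = 0))
          (fun k c => (1 - t) * F k c) (fun k c => t * F k c)) =
      bacSum (cells lam mu) F t :=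
  tabSum_altPrm_eq_bacSum (cells_ordConnected hlam.1 hmu.1) F t

/-- **Identification with Bachmann's ordered-Young-tableaux Schur functions**
(equation (40)): for `m = n` and the alternating marked alphabet
`1′ < 2 < 3′ < 4 < ⋯ < (2n−1)′ < 2n` (odd letters primed, even letters unprimed),
setting `x_{k,c} = (1−t) f_{k,c}` and `y_{k,c} = t f_{k,c}` gives
`s^{R′}_{λ/μ}(X,Y) = s^{Bac}_{λ/μ}(F;t)`. -/
theorem bachmann_identification (n : ℕ) (lam mu : List ℕ) (hlam : IsPartition lam)
    (hmu : IsPartition mu) (hsub : Contained mu lam)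
    (F : Fin n → ℤ → A) (t : A) :
    tabSum (cells lam mu) (fun r : Fin (n + n) => decide ((r : ℕ) % 2 = 0))
        (wNinth (fun r : Fin (n + n) => decide ((r : ℕ) % 2 = 0))
          (fun k c => (1 - t) * F k c) (fun k c => t * F k c)) =
      bacSum (cells lam mu) F t :=
  bachmann_identification_general n lam mu hlam hmu F t

end SuperSchur
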